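/- arXiv:1308.4322 — 3 statements merged into one kernel-verified Lean document; each statement's English description precedes it below -/
import Mathlib

section
/- For all real α, β > -1 and nonnegative integer k, the modified moment M_k(α,β) = ∫_{-1}^{1} (1-x)^α (1+x)^β T_k(x) dx satisfies the three-term recurrence (β+α+k+2)·M_{k+1}(α,β) + 2(α-β)·M_k(α,β) + (β+α-k+2)·M_{k-1}(α,β) = 0 for k ≥ 1. -/
/-!
Differentiate `(1 - x) ^ (α + 1) * (1 + x) ^ (β + 1) * T_k x`: the derivative is the weight times
`(1 - x²) T_k' + (β - α - (α + β + 2) x) T_k`, and by `(1 - x²) T_k' = k (T_{k-1} - x T_k)` and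
`2 x T_k = T_{k+1} + T_{k-1}` this is `-1/2` times the combination of `T_{k+1}, T_k, T_{k-1}` in
the recurrence. Since `α + 1, β + 1 > 0` the antiderivative vanishes at `±1`, so the integral of
the combination against the weight is zero.
-/

/-- The modified moment `M_k(α,β) = ∫_{-1}^1 (1-x)^α (1+x)^β T_k(x) dx`. -/
noncomputable def modMoment (α β : ℝ) (k : ℕ) : ℝ :=
  ∫ x in (-1:ℝ)..1, (1 - x) ^ α * (1 + x) ^ β * (Polynomial.Chebyshev.T ℝ k).eval x

open Polynomial Polynomial.Chebyshev MeasureTheory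
open intervalIntegral (intervalIntegrable_rpow' integral_eq_sub_of_hasDerivAt_of_le)

lemma intervalIntegrable_one_add_rpow {β : ℝ} (hβ : -1 < β) (a b : ℝ) :
    IntervalIntegrable (fun x : ℝ => (1 + x) ^ β) volume a b := by
  simpa [add_comm] using
    (intervalIntegrable_rpow' (a := 1 + a) (b := 1 + b) hβ).comp_add_left 1

lemma intervalIntegrable_one_sub_rpow {α : ℝ} (hα : -1 < α) (a b : ℝ) :
    IntervalIntegrable (fun x : ℝ => (1 - x) ^ α) volume a b := by
  simpa using
    ((intervalIntegrable_rpow' (a := 1 - b) (b := 1 - a) hα).comp_sub_left 1).symm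

lemma intervalIntegrable_jacobiWeight_mul {α β : ℝ} (hα : -1 < α) (hβ : -1 < β) {g : ℝ → ℝ}
    (hg : Continuous g) :
    IntervalIntegrable (fun x => (1 - x) ^ α * (1 + x) ^ β * g x) volume (-1) 1 := by
  refine IntervalIntegrable.trans (b := 0) ?_ ?_
  · have hcont : ContinuousOn (fun x : ℝ => (1 - x) ^ α * g x) (Set.uIcc (-1) 0) := by
      refine (ContinuousOn.rpow_const (by fun_prop) fun x hx => Or.inl ?_).mul hg.continuousOn
      rw [Set.uIcc_of_le (by norm_num)] at hx
      linarith [hx.2]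
    refine ((intervalIntegrable_one_add_rpow hβ _ _).continuousOn_mul hcont).congr ?_
    exact fun x _ => by ring
  · have hcont : ContinuousOn (fun x : ℝ => (1 + x) ^ β * g x) (Set.uIcc 0 1) := by
      refine (ContinuousOn.rpow_const (by fun_prop) fun x hx => Or.inl ?_).mul hg.continuousOn
      rw [Set.uIcc_of_le (by norm_num)] at hx
      linarith [hx.1]
    refine ((intervalIntegrable_one_sub_rpow hα _ _).mul_continuousOn hcont).congr ?_
    exact fun x _ => by ring

lemma integral_jacobiWeight_mul_eq_zero {α β : ℝ} (hα : -1 < α) (hβ : -1 < β) {f f' : ℝ → ℝ}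
    (hf : ∀ x, HasDerivAt f (f' x) x) (hf' : Continuous f') :
    ∫ x in (-1 : ℝ)..1, (1 - x) ^ α * (1 + x) ^ β *
      ((1 - x ^ 2) * f' x + (β - α - (α + β + 2) * x) * f x) = 0 := by
  have hf_cont : Continuous f := continuous_iff_continuousAt.2 fun x => (hf x).continuousAt
  have hF_cont : ContinuousOn (fun y => (1 - y) ^ (α + 1) * (1 + y) ^ (β + 1) * f y)
      (Set.Icc (-1) 1) := by
    refine ((ContinuousOn.rpow_const (by fun_prop) fun _ _ => Or.inr ?_).mul
      (ContinuousOn.rpow_const (by fun_prop) fun _ _ => Or.inr ?_)).mul hf_cont.continuousOn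
      <;> linarith
  have hF_deriv : ∀ x ∈ Set.Ioo (-1 : ℝ) 1,
      HasDerivAt (fun y => (1 - y) ^ (α + 1) * (1 + y) ^ (β + 1) * f y)
        ((1 - x) ^ α * (1 + x) ^ β *
          ((1 - x ^ 2) * f' x + (β - α - (α + β + 2) * x) * f x)) x := by
    rintro x ⟨hx₁, hx₂⟩
    have hsub : HasDerivAt (fun y : ℝ => (1 - y) ^ (α + 1)) (-((α + 1) * (1 - x) ^ α)) x := by
      convert ((hasDerivAt_id' x).const_sub 1).rpow_const (p := α + 1) (Or.inl (by linarith))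
        using 1
      rw [add_sub_cancel_right]; ring
    have hadd : HasDerivAt (fun y : ℝ => (1 + y) ^ (β + 1)) ((β + 1) * (1 + x) ^ β) x := by
      simpa using ((hasDerivAt_id' x).const_add 1).rpow_const (p := β + 1) (Or.inl (by linarith))
    refine ((hsub.mul hadd).mul (hf x)).congr_deriv ?_
    simp only [Pi.mul_apply]
    rw [Real.rpow_add_one (by linarith), Real.rpow_add_one (by linarith)]
    ring
  have hF_int := intervalIntegrable_jacobiWeight_mul hα hβ (g := fun x =>
    (1 - x ^ 2) * f' x + (β - α - (α + β + 2) * x) * f x) (by fun_prop)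
  rw [integral_eq_sub_of_hasDerivAt_of_le (by norm_num) hF_cont hF_deriv hF_int]
  norm_num [Real.zero_rpow (by linarith : α + 1 ≠ 0), Real.zero_rpow (by linarith : β + 1 ≠ 0)]

lemma eval_jacobiOperator_T (α β : ℝ) (n : ℤ) (x : ℝ) :
    (1 - x ^ 2) * (derivative (T ℝ n)).eval x + (β - α - (α + β + 2) * x) * (T ℝ n).eval x =
      -(1 / 2) * ((β + α + n + 2) * (T ℝ (n + 1)).eval x + 2 * (α - β) * (T ℝ n).eval x
        + (β + α - n + 2) * (T ℝ (n - 1)).eval x) := by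
  have hderiv : (1 - x ^ 2) * (derivative (T ℝ n)).eval x
      = n * ((T ℝ (n - 1)).eval x - x * (T ℝ n).eval x) := by
    simpa using congrArg (eval x) (one_sub_X_sq_mul_derivative_T_eq_poly_in_T (R := ℝ) (n - 1))
  have hrec : (T ℝ (n + 1)).eval x = 2 * x * (T ℝ n).eval x - (T ℝ (n - 1)).eval x := by
    simpa using congrArg (eval x) (T_add_one ℝ n)
  rw [hderiv, hrec]
  ring

lemma integral_jacobiWeight_mul_T_combination {α β : ℝ} (hα : -1 < α) (hβ : -1 < β)
    (a b c : ℝ) (i j l : ℕ) :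
    ∫ x in (-1 : ℝ)..1, (1 - x) ^ α * (1 + x) ^ β *
      (a * (T ℝ i).eval x + b * (T ℝ j).eval x + c * (T ℝ l).eval x) =
      a * modMoment α β i + b * modMoment α β j + c * modMoment α β l := by
  have hint (n : ℕ) := intervalIntegrable_jacobiWeight_mul hα hβ (T ℝ n).continuous
  simp only [mul_add, mul_left_comm _ a, mul_left_comm _ b, mul_left_comm _ c]
  rw [intervalIntegral.integral_add (((hint i).const_mul a).add ((hint j).const_mul b))
      ((hint l).const_mul c),
    intervalIntegral.integral_add ((hint i).const_mul a) ((hint j).const_mul b),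
    intervalIntegral.integral_const_mul, intervalIntegral.integral_const_mul,
    intervalIntegral.integral_const_mul]
  rfl

theorem modMoment_recurrence (α β : ℝ) (hα : -1 < α) (hβ : -1 < β) (k : ℕ) (hk : 1 ≤ k) :
    (β + α + k + 2) * modMoment α β (k + 1) + 2 * (α - β) * modMoment α β k
      + (β + α - k + 2) * modMoment α β (k - 1) = 0 := by
  obtain ⟨m, rfl⟩ : ∃ m, k = m + 1 := ⟨k - 1, by omega⟩
  have key := integral_jacobiWeight_mul_eq_zero hα hβ
    (fun x => (T ℝ (m + 1 : ℕ)).hasDerivAt x) (derivative (T ℝ (m + 1 : ℕ))).continuous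
  have hsucc : ((m + 1 : ℕ) : ℤ) + 1 = ((m + 1 + 1 : ℕ) : ℤ) := by push_cast; ring
  have hpred : ((m + 1 : ℕ) : ℤ) - 1 = ((m : ℕ) : ℤ) := by push_cast; ring
  simp only [eval_jacobiOperator_T, hsucc, hpred, mul_left_comm _ (-(1 / 2) : ℝ),
    intervalIntegral.integral_const_mul, integral_jacobiWeight_mul_T_combination hα hβ,
    Int.cast_natCast] at key
  simp only [add_tsub_cancel_right]
  linarith
end

section
/- Let α > -1/2 and β = -1/2. Then |M_m(α,-1/2)| = |∫_{-1}^{1}(1-x)^α(1+x)^{-1/2} T_m(x)dx| = O(m^{-2-2α}) as m → ∞ when α < 1/2, in the sense that there is C with |M_m(α,-1/2)| ≤ C m^{-2-2α} for all m ≥ 1. -/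
/-!
Substituting `x = cos θ` turns the moment into `2 ^ (α - 1/2)` times the cosine coefficient
`∫_{-π}^{π} h(θ) cos (m θ) dθ` of `h(θ) = |sin (θ / 2)| ^ p`, `p = 1 + 2α ∈ (0, 2)`.
Shifting `θ` by `δ = π / m` flips the sign of `cos (m θ)`, so the coefficient of the third
forward difference `Δ_δ³ h` is `(-2)³` times that of `h`, and `8 |coefficient| ≤ ∫ |Δ_δ³ h|` over
any period. On the `5δ`-window around the singularity `θ = 0` the four values of `h` entering
`Δ_δ³ h` are `O(δ ^ p)`; elsewhere `|Δ_δ³ h| ≤ δ³ sup |h⁽³⁾|` with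
`|h⁽³⁾(x)| ≲ dist(x, 2πℤ) ^ (p - 3)`, whose integral beyond distance `δ` is `O(δ ^ (p - 2))`
because `p < 2`. Both parts are `O(δ ^ (p + 1)) = O(m ^ (-2 - 2α))`.
-/

open Real Set MeasureTheory intervalIntegral Asymptotics Filter
open scoped fwdDiff Interval

section FwdDiff

variable {a δ : ℝ}

lemma mem_Icc_succ_of_mem_Icc {n : ℕ} (hδ : 0 ≤ δ) {x : ℝ} (hx : x ∈ Icc a (a + n * δ)) :
    x ∈ Icc a (a + (n + 1 : ℕ) * δ) ∧ x + δ ∈ Icc a (a + (n + 1 : ℕ) * δ) := by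
  push_cast
  constructor <;> constructor <;> linarith [hx.1, hx.2]

theorem abs_fwdDiff_iter_le_of_abs_le (hδ : 0 ≤ δ) (n : ℕ) {f : ℝ → ℝ} {M : ℝ}
    (hf : ∀ x ∈ Icc a (a + n * δ), |f x| ≤ M) : |(Δ_[δ])^[n] f a| ≤ 2 ^ n * M := by
  induction n generalizing f M with
  | zero => simpa using hf a (by simp)
  | succ n ih =>
    rw [Function.iterate_succ_apply, pow_succ, mul_assoc]
    refine ih fun x hx => ?_
    obtain ⟨hx₀, hx₁⟩ := mem_Icc_succ_of_mem_Icc hδ hx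
    calc |f (x + δ) - f x| ≤ |f (x + δ)| + |f x| := abs_sub _ _
      _ ≤ 2 * M := by linarith [hf _ hx₀, hf _ hx₁]

theorem abs_fwdDiff_iter_le_of_hasDerivAt (hδ : 0 ≤ δ) (n : ℕ) {f : ℕ → ℝ → ℝ} {M : ℝ}
    (hf : ∀ k < n, ∀ x ∈ Icc a (a + n * δ), HasDerivAt (f k) (f (k + 1) x) x)
    (hM : ∀ x ∈ Icc a (a + n * δ), |f n x| ≤ M) : |(Δ_[δ])^[n] (f 0) a| ≤ M * δ ^ n := by
  induction n generalizing f M with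
  | zero => simpa using hM a (by simp)
  | succ n ih =>
    rw [Function.iterate_succ_apply, pow_succ, mul_comm _ δ, ← mul_assoc]
    refine ih (f := fun k => Δ_[δ] (f k)) (fun k hk x hx => ?_) (fun x hx => ?_)
    · obtain ⟨hx₀, hx₁⟩ := mem_Icc_succ_of_mem_Icc hδ hx
      exact ((hf k (by omega) _ hx₁).comp_add_const x δ).sub (hf k (by omega) _ hx₀)
    · obtain ⟨hx₀, hx₁⟩ := mem_Icc_succ_of_mem_Icc hδ hx
      have hsub : Icc x (x + δ) ⊆ Icc a (a + (n + 1 : ℕ) * δ) := Icc_subset_Icc hx₀.1 hx₁.2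
      have := norm_image_sub_le_of_norm_deriv_le_segment' (f := f n) (C := M)
        (fun y hy => (hf n (by omega) y (hsub hy)).hasDerivWithinAt)
        (fun y hy => hM y (hsub (Ico_subset_Icc_self hy))) (x + δ) ⟨by linarith, le_rfl⟩
      simpa [fwdDiff] using this

end FwdDiff

section FourierCos

variable {g : ℝ → ℝ} {m : ℕ}

lemma Function.Periodic.fwdDiff {c : ℝ} (hg : Function.Periodic g c) (δ : ℝ) :
    Function.Periodic (Δ_[δ] g) c := fun x => by
  simp only [_root_.fwdDiff, add_right_comm x c δ, hg (x + δ), hg x]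

lemma Continuous.fwdDiff (hg : Continuous g) (δ : ℝ) : Continuous (Δ_[δ] g) :=
  (hg.comp (continuous_add_const δ)).sub hg

lemma periodic_mul_cos_nat_mul (hg : Function.Periodic g (2 * π)) :
    Function.Periodic (fun θ => g θ * cos (m * θ)) (2 * π) := fun θ => by
  simp only [hg θ, mul_add, cos_add_nat_mul_two_pi]

lemma integral_comp_add_mul_cos (hg : Function.Periodic g (2 * π)) (hm : m ≠ 0) (a : ℝ) :
    ∫ θ in a..a + 2 * π, g (θ + π / m) * cos (m * θ) =
      -∫ θ in a..a + 2 * π, g θ * cos (m * θ) := by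
  have hflip : ∀ θ, g (θ + π / m) * cos (m * θ) =
      -(g (θ + π / m) * cos (m * (θ + π / m))) := fun θ => by
    rw [mul_add, mul_div_cancel₀ _ (Nat.cast_ne_zero.2 hm), cos_add_pi]
    ring
  simp only [hflip, intervalIntegral.integral_neg, intervalIntegral.integral_comp_add_right
    (fun θ => g θ * cos (m * θ)), add_right_comm a (2 * π),
    (periodic_mul_cos_nat_mul hg).intervalIntegral_add_eq (a + π / m) a]

lemma Continuous.fwdDiff_iter (hg : Continuous g) (δ : ℝ) (n : ℕ) :
    Continuous ((Δ_[δ])^[n] g) := by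
  induction n with
  | zero => exact hg
  | succ n ih => rw [Function.iterate_succ_apply']; exact ih.fwdDiff δ

lemma integral_fwdDiff_mul_cos (hg : Continuous g) (hper : Function.Periodic g (2 * π))
    (hm : m ≠ 0) (a : ℝ) :
    ∫ θ in a..a + 2 * π, Δ_[π / m] g θ * cos (m * θ) =
      -2 * ∫ θ in a..a + 2 * π, g θ * cos (m * θ) := by
  simp only [_root_.fwdDiff, sub_mul]
  rw [intervalIntegral.integral_sub
      ((by fun_prop : Continuous fun θ => g (θ + π / m) * cos (m * θ)).intervalIntegrable _ _)
      ((by fun_prop : Continuous fun θ => g θ * cos (m * θ)).intervalIntegrable _ _),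
    integral_comp_add_mul_cos hper hm]
  ring

lemma integral_fwdDiff_iter_mul_cos (hg : Continuous g) (hper : Function.Periodic g (2 * π))
    (hm : m ≠ 0) (a : ℝ) (n : ℕ) :
    ∫ θ in a..a + 2 * π, (Δ_[π / m])^[n] g θ * cos (m * θ) =
      (-2) ^ n * ∫ θ in a..a + 2 * π, g θ * cos (m * θ) := by
  induction n generalizing g with
  | zero => simp
  | succ n ih =>
    rw [Function.iterate_succ_apply, ih (hg.fwdDiff _) (hper.fwdDiff _),
      integral_fwdDiff_mul_cos hg hper hm, pow_succ]
    ring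

end FourierCos

noncomputable def sinHalfPow (p x : ℝ) : ℝ := |sin (x / 2)| ^ p

/-- On `(0, 2π)`, `sinHalfPowDeriv p k` is the `k`-th derivative of `sinHalfPow p` for `k ≤ 3`;
for `k > 3` it is the third derivative again and carries no meaning. -/
noncomputable def sinHalfPowDeriv (p : ℝ) : ℕ → ℝ → ℝ
  | 0 => sinHalfPow p
  | 1 => fun x => sin (x / 2) ^ (p - 1) * (p / 2 * cos (x / 2))
  | 2 => fun x => sin (x / 2) ^ (p - 2) * (p / 4 * ((p - 1) * cos (x / 2) ^ 2 - sin (x / 2) ^ 2))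
  | _ => fun x => sin (x / 2) ^ (p - 3) *
      (p / 8 * cos (x / 2) * ((p - 1) * (p - 2) * cos (x / 2) ^ 2 - (3 * p - 2) * sin (x / 2) ^ 2))

namespace sinHalfPow

variable {p : ℝ}

lemma continuous (hp : 0 ≤ p) : Continuous (sinHalfPow p) :=
  (by fun_prop : Continuous fun x => |sin (x / 2)|).rpow_const fun _ => Or.inr hp

lemma periodic (p : ℝ) : Function.Periodic (sinHalfPow p) (2 * π) := fun x => by
  rw [sinHalfPow, sinHalfPow, add_div, mul_div_cancel_left₀ _ two_ne_zero, sin_add_pi, abs_neg]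

lemma neg (p x : ℝ) : sinHalfPow p (-x) = sinHalfPow p x := by
  rw [sinHalfPow, sinHalfPow, neg_div, sin_neg, abs_neg]

lemma abs_le_rpow (hp : 0 ≤ p) (x : ℝ) : |sinHalfPow p x| ≤ |x / 2| ^ p := by
  rw [sinHalfPow, abs_of_nonneg (rpow_nonneg (abs_nonneg _) _)]
  exact rpow_le_rpow (abs_nonneg _) abs_sin_le_abs hp

end sinHalfPow

lemma hasDerivAt_sin_half (x : ℝ) : HasDerivAt (fun y => sin (y / 2)) (cos (x / 2) / 2) x := by
  simpa [Function.comp_def, div_eq_mul_inv] using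
    (hasDerivAt_sin (x / 2)).comp x ((hasDerivAt_id x).div_const 2)

lemma hasDerivAt_cos_half (x : ℝ) : HasDerivAt (fun y => cos (y / 2)) (-sin (x / 2) / 2) x := by
  simpa [Function.comp_def, div_eq_mul_inv] using
    (hasDerivAt_cos (x / 2)).comp x ((hasDerivAt_id x).div_const 2)

lemma hasDerivAt_sin_half_rpow_mul {r x Q' : ℝ} {Q : ℝ → ℝ} (hx : 0 < sin (x / 2))
    (hQ : HasDerivAt Q Q' x) :
    HasDerivAt (fun y => sin (y / 2) ^ r * Q y)
      (sin (x / 2) ^ (r - 1) * (r / 2 * cos (x / 2) * Q x + sin (x / 2) * Q')) x := by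
  refine (((hasDerivAt_sin_half x).rpow_const (p := r) (Or.inl hx.ne')).mul hQ).congr_deriv ?_
  rw [rpow_sub_one hx.ne']
  field_simp

lemma sin_half_pos {x : ℝ} (hx : x ∈ Ioo 0 (2 * π)) : 0 < sin (x / 2) :=
  sin_pos_of_pos_of_lt_pi (by linarith [hx.1]) (by linarith [hx.2])

lemma hasDerivAt_sinHalfPowDeriv {p : ℝ} {k : ℕ} (hk : k < 3) {x : ℝ} (hx : x ∈ Ioo 0 (2 * π)) :
    HasDerivAt (sinHalfPowDeriv p k) (sinHalfPowDeriv p (k + 1) x) x := by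
  have hs := sin_half_pos hx
  interval_cases k
  · have hloc : (fun y => sin (y / 2) ^ p * 1) =ᶠ[nhds x] sinHalfPow p := by
      filter_upwards [continuousAt_const.eventually_lt (hasDerivAt_sin_half x).continuousAt hs]
        with y hy
      simp [sinHalfPow, abs_of_pos hy]
    refine ((hasDerivAt_sin_half_rpow_mul hs (hasDerivAt_const x (1 : ℝ))).congr_of_eventuallyEq
      hloc.symm).congr_deriv ?_
    simp only [sinHalfPowDeriv]
    ring
  · refine (hasDerivAt_sin_half_rpow_mul hs
      ((hasDerivAt_cos_half x).const_mul (p / 2))).congr_deriv ?_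
    simp only [sinHalfPowDeriv, show p - 1 - 1 = p - 2 by ring]
    ring
  · refine (hasDerivAt_sin_half_rpow_mul (Q := fun y => p / 4 * ((p - 1) * cos (y / 2) ^ 2 -
      sin (y / 2) ^ 2)) hs ((((hasDerivAt_cos_half x).pow 2).const_mul (p - 1)).sub
        ((hasDerivAt_sin_half x).pow 2) |>.const_mul (p / 4))).congr_deriv ?_
    simp only [sinHalfPowDeriv, show p - 2 - 1 = p - 3 by ring]
    ring

lemma abs_sinHalfPowDeriv_three_le (p : ℝ) {x : ℝ} (hx : x ∈ Ioo 0 (2 * π)) :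
    |sinHalfPowDeriv p 3 x| ≤
      |p| / 8 * (|(p - 1) * (p - 2)| + |3 * p - 2|) * sin (x / 2) ^ (p - 3) := by
  have hpow : 0 ≤ sin (x / 2) ^ (p - 3) := rpow_nonneg (sin_half_pos hx).le _
  have hc : |cos (x / 2)| ≤ 1 := abs_cos_le_one _
  have hc2 : cos (x / 2) ^ 2 ≤ 1 := cos_sq_le_one _
  have hs2 : sin (x / 2) ^ 2 ≤ 1 := sin_sq_le_one _
  have hbracket : |(p - 1) * (p - 2) * cos (x / 2) ^ 2 - (3 * p - 2) * sin (x / 2) ^ 2| ≤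
      |(p - 1) * (p - 2)| + |3 * p - 2| := by
    refine (abs_sub _ _).trans (add_le_add ?_ ?_) <;>
      rw [abs_mul, abs_pow, sq_abs] <;>
      exact mul_le_of_le_one_right (abs_nonneg _) ‹_›
  calc |sinHalfPowDeriv p 3 x|
      = |p| / 8 * |cos (x / 2)| *
          |(p - 1) * (p - 2) * cos (x / 2) ^ 2 - (3 * p - 2) * sin (x / 2) ^ 2| *
          sin (x / 2) ^ (p - 3) := by
        simp only [sinHalfPowDeriv, abs_mul, abs_of_nonneg hpow, abs_div,
          show |(8 : ℝ)| = 8 by norm_num]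
        ring
    _ ≤ |p| / 8 * 1 * (|(p - 1) * (p - 2)| + |3 * p - 2|) * sin (x / 2) ^ (p - 3) := by gcongr
    _ = _ := by ring

lemma min_le_pi_mul_sin_half {x : ℝ} (hx : x ∈ Icc 0 (2 * π)) :
    min x (2 * π - x) ≤ π * sin (x / 2) := by
  have key : ∀ y, 0 ≤ y → y ≤ π → y ≤ π * sin (y / 2) := fun y hy₀ hy₁ => by
    have := mul_le_sin (x := y / 2) (by linarith) (by linarith)
    rw [div_mul_div_comm, mul_comm] at this
    have hπ := pi_pos
    rw [div_le_iff₀ (by positivity)] at this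
    linarith
  rcases le_total x π with h | h
  · exact (min_le_left _ _).trans (key x hx.1 h)
  · refine (min_le_right _ _).trans ?_
    have := key (2 * π - x) (by linarith [hx.2]) (by linarith)
    rwa [sub_div, mul_div_cancel_left₀ _ two_ne_zero, sin_pi_sub] at this

lemma exists_abs_sinHalfPowDeriv_three_le {p : ℝ} (hp : p ≤ 3) :
    ∃ K ≥ 0, ∀ x ∈ Ioo 0 (2 * π),
      |sinHalfPowDeriv p 3 x| ≤ K * (x ^ (p - 3) + (2 * π - x) ^ (p - 3)) := by
  refine ⟨|p| / 8 * (|(p - 1) * (p - 2)| + |3 * p - 2|) * π ^ (3 - p), by positivity,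
    fun x hx => ?_⟩
  have hmin : 0 < min x (2 * π - x) := lt_min hx.1 (by linarith [hx.2])
  have hsin : sin (x / 2) ^ (p - 3) ≤ π ^ (3 - p) * min x (2 * π - x) ^ (p - 3) := by
    calc sin (x / 2) ^ (p - 3) ≤ (min x (2 * π - x) / π) ^ (p - 3) :=
          rpow_le_rpow_of_nonpos (by positivity)
            ((div_le_iff₀' pi_pos).2 (min_le_pi_mul_sin_half (Ioo_subset_Icc_self hx)))
            (by linarith)
      _ = π ^ (3 - p) * min x (2 * π - x) ^ (p - 3) := by
          rw [div_rpow hmin.le pi_pos.le, div_eq_mul_inv, ← rpow_neg pi_pos.le, neg_sub,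
            mul_comm]
  have hsum : min x (2 * π - x) ^ (p - 3) ≤ x ^ (p - 3) + (2 * π - x) ^ (p - 3) := by
    have h₁ := rpow_nonneg hx.1.le (p - 3)
    have h₂ := rpow_nonneg (by linarith [hx.2] : 0 ≤ 2 * π - x) (p - 3)
    rcases min_choice x (2 * π - x) with h | h <;> rw [h] <;> linarith
  calc |sinHalfPowDeriv p 3 x|
      ≤ |p| / 8 * (|(p - 1) * (p - 2)| + |3 * p - 2|) * sin (x / 2) ^ (p - 3) :=
        abs_sinHalfPowDeriv_three_le p hx
    _ ≤ |p| / 8 * (|(p - 1) * (p - 2)| + |3 * p - 2|) *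
          (π ^ (3 - p) * (x ^ (p - 3) + (2 * π - x) ^ (p - 3))) := by
        gcongr
        exact hsin.trans (by gcongr)
    _ = _ := by ring

lemma integral_rpow_le_of_lt_neg_one {r a b : ℝ} (hr : r < -1) (ha : 0 < a) (hab : a ≤ b) :
    ∫ x in a..b, x ^ r ≤ a ^ (r + 1) / -(r + 1) := by
  have h0 : (0 : ℝ) ∉ uIcc a b := by
    rw [uIcc_of_le hab]; exact fun h => (lt_of_lt_of_le ha h.1).ne rfl
  rw [integral_rpow (Or.inr ⟨hr.ne, h0⟩), ← neg_div_neg_eq, neg_sub]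
  have : 0 ≤ b ^ (r + 1) := rpow_nonneg (ha.trans_le hab).le _
  gcongr
  · linarith
  · linarith

lemma exists_abs_fwdDiff_three_sinHalfPow_le {p : ℝ} (hp : p ≤ 3) :
    ∃ K ≥ 0, ∀ δ θ : ℝ, 0 ≤ δ → 0 < θ → θ + 3 * δ < 2 * π →
      |(Δ_[δ])^[3] (sinHalfPow p) θ| ≤
        K * δ ^ 3 * (θ ^ (p - 3) + (2 * π - 3 * δ - θ) ^ (p - 3)) := by
  obtain ⟨K, hK₀, hK⟩ := exists_abs_sinHalfPowDeriv_three_le hp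
  refine ⟨K, hK₀, fun δ θ hδ hθ hθ' => ?_⟩
  have hsub : ∀ x ∈ Icc θ (θ + ((3 : ℕ) : ℝ) * δ), x ∈ Ioo 0 (2 * π) := fun x hx => by
    push_cast at hx; exact ⟨by linarith [hx.1], by linarith [hx.2]⟩
  have hbound : ∀ x ∈ Icc θ (θ + ((3 : ℕ) : ℝ) * δ), |sinHalfPowDeriv p 3 x| ≤
      K * (θ ^ (p - 3) + (2 * π - 3 * δ - θ) ^ (p - 3)) := fun x hx => by
    refine (hK x (hsub x hx)).trans ?_
    push_cast at hx
    have h₁ : x ^ (p - 3) ≤ θ ^ (p - 3) := rpow_le_rpow_of_nonpos hθ hx.1 (by linarith)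
    have h₂ : (2 * π - x) ^ (p - 3) ≤ (2 * π - 3 * δ - θ) ^ (p - 3) :=
      rpow_le_rpow_of_nonpos (by linarith) (by linarith [hx.2]) (by linarith)
    gcongr
  have := abs_fwdDiff_iter_le_of_hasDerivAt hδ 3 (f := sinHalfPowDeriv p)
    (fun k hk x hx => hasDerivAt_sinHalfPowDeriv hk (hsub x hx)) hbound
  simpa only [sinHalfPowDeriv, mul_right_comm] using this

lemma integral_abs_fwdDiff_three_sinHalfPow_near_le {p δ : ℝ} (hp : 0 ≤ p) (hδ : 0 ≤ δ) :
    ∫ θ in -4 * δ..δ, |(Δ_[δ])^[3] (sinHalfPow p) θ| ≤ 40 * 2 ^ p * δ ^ (p + 1) := by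
  have hpt : ∀ θ ∈ Ι (-4 * δ) δ, ‖|(Δ_[δ])^[3] (sinHalfPow p) θ|‖ ≤ 2 ^ 3 * (2 * δ) ^ p := by
    intro θ hθ
    rw [uIoc_of_le (by linarith)] at hθ
    rw [norm_abs_eq_norm, norm_eq_abs]
    refine abs_fwdDiff_iter_le_of_abs_le hδ 3 fun x hx => (sinHalfPow.abs_le_rpow hp x).trans ?_
    push_cast at hx
    refine rpow_le_rpow (abs_nonneg _) ?_ hp
    rw [abs_le]
    constructor <;> linarith [hx.1, hx.2, hθ.1, hθ.2]
  calc ∫ θ in -4 * δ..δ, |(Δ_[δ])^[3] (sinHalfPow p) θ|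
      ≤ 2 ^ 3 * (2 * δ) ^ p * |δ - -4 * δ| :=
        (le_abs_self _).trans (norm_integral_le_of_norm_le_const hpt)
    _ = 40 * 2 ^ p * δ ^ (p + 1) := by
        rw [mul_rpow zero_le_two hδ, rpow_add_one' hδ (by linarith), abs_of_nonneg (by linarith)]
        ring

lemma exists_integral_abs_fwdDiff_three_sinHalfPow_far_le {p : ℝ} (hp0 : 0 < p) (hp2 : p < 2) :
    ∃ C, ∀ δ : ℝ, 0 < δ → 5 * δ ≤ 2 * π →
      ∫ θ in δ..2 * π - 4 * δ, |(Δ_[δ])^[3] (sinHalfPow p) θ| ≤ C * δ ^ (p + 1) := by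
  obtain ⟨K, hK₀, hK⟩ := exists_abs_fwdDiff_three_sinHalfPow_le (by linarith : p ≤ 3)
  refine ⟨2 * K / (2 - p), fun δ hδ h5δ => ?_⟩
  have hab : δ ≤ 2 * π - 4 * δ := by linarith
  have hint₁ : IntervalIntegrable (fun θ => θ ^ (p - 3)) volume δ (2 * π - 4 * δ) :=
    intervalIntegrable_rpow (Or.inr fun h => by rw [uIcc_of_le hab] at h; linarith [h.1])
  have hint₂ : IntervalIntegrable (fun θ => (2 * π - 3 * δ - θ) ^ (p - 3)) volume δ
      (2 * π - 4 * δ) := by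
    refine ContinuousOn.intervalIntegrable fun θ hθ => ?_
    rw [uIcc_of_le hab] at hθ
    exact ((continuousAt_const.sub continuousAt_id).rpow_const
      (Or.inl (by linarith [hθ.2] : (0 : ℝ) < 2 * π - 3 * δ - θ).ne')).continuousWithinAt
  have hreflect : ∫ θ in δ..2 * π - 4 * δ, (2 * π - 3 * δ - θ) ^ (p - 3) =
      ∫ θ in δ..2 * π - 4 * δ, θ ^ (p - 3) := by
    rw [intervalIntegral.integral_comp_sub_left (fun θ => θ ^ (p - 3))]
    congr 1 <;> ring
  have htail : ∫ θ in δ..2 * π - 4 * δ, θ ^ (p - 3) ≤ δ ^ (p - 2) / (2 - p) := by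
    have := integral_rpow_le_of_lt_neg_one (by linarith : p - 3 < -1) hδ hab
    rwa [show p - 3 + 1 = p - 2 by ring, show -(p - 2) = 2 - p by ring] at this
  calc ∫ θ in δ..2 * π - 4 * δ, |(Δ_[δ])^[3] (sinHalfPow p) θ|
      ≤ ∫ θ in δ..2 * π - 4 * δ, K * δ ^ 3 * (θ ^ (p - 3) + (2 * π - 3 * δ - θ) ^ (p - 3)) :=
        integral_mono_on hab
          (((sinHalfPow.continuous hp0.le).fwdDiff_iter δ 3).abs.intervalIntegrable _ _)
          ((hint₁.add hint₂).const_mul _)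
          fun θ hθ => hK δ θ hδ.le (by linarith [hθ.1]) (by linarith [hθ.2])
    _ = K * δ ^ 3 * (2 * ∫ θ in δ..2 * π - 4 * δ, θ ^ (p - 3)) := by
        rw [intervalIntegral.integral_const_mul, intervalIntegral.integral_add hint₁ hint₂,
          hreflect]
        ring
    _ ≤ K * δ ^ 3 * (2 * (δ ^ (p - 2) / (2 - p))) := by gcongr
    _ = 2 * K / (2 - p) * δ ^ (p + 1) := by
        rw [show p + 1 = (3 : ℕ) + (p - 2) by push_cast; ring, rpow_add hδ, rpow_natCast]
        ring

lemma exists_abs_integral_sinHalfPow_mul_cos_le {p : ℝ} (hp0 : 0 < p) (hp2 : p < 2) :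
    ∃ C, ∀ m : ℕ, 3 ≤ m →
      |∫ θ in -π..π, sinHalfPow p θ * cos (m * θ)| ≤ C * (π / m) ^ (p + 1) := by
  obtain ⟨C, hC⟩ := exists_integral_abs_fwdDiff_three_sinHalfPow_far_le hp0 hp2
  refine ⟨(40 * 2 ^ p + C) / 8, fun m hm => ?_⟩
  have hm' : (3 : ℝ) ≤ m := by exact_mod_cast hm
  set δ := π / m with hδ_def
  have hδ : 0 < δ := div_pos pi_pos (by linarith)
  have h5δ : 5 * δ ≤ 2 * π := by
    have : δ * m = π := div_mul_cancel₀ _ (by positivity)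
    nlinarith [pi_pos]
  have hcont := (sinHalfPow.continuous hp0.le).fwdDiff_iter δ 3
  have hcoef : (-2) ^ 3 * ∫ θ in -π..π, sinHalfPow p θ * cos (m * θ) =
      ∫ θ in -4 * δ..-4 * δ + 2 * π, (Δ_[δ])^[3] (sinHalfPow p) θ * cos (m * θ) := by
    rw [integral_fwdDiff_iter_mul_cos (sinHalfPow.continuous hp0.le) (sinHalfPow.periodic p)
      (by omega), ← (periodic_mul_cos_nat_mul (sinHalfPow.periodic p)).intervalIntegral_add_eq
      (-π), show -π + 2 * π = π by ring]
  have hwindow : |∫ θ in -4 * δ..-4 * δ + 2 * π, (Δ_[δ])^[3] (sinHalfPow p) θ * cos (m * θ)| ≤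
      (∫ θ in -4 * δ..δ, |(Δ_[δ])^[3] (sinHalfPow p) θ|) +
        ∫ θ in δ..2 * π - 4 * δ, |(Δ_[δ])^[3] (sinHalfPow p) θ| := by
    rw [integral_add_adjacent_intervals (hcont.abs.intervalIntegrable _ _)
      (hcont.abs.intervalIntegrable _ _), show 2 * π - 4 * δ = -4 * δ + 2 * π by ring,
      ← norm_eq_abs]
    refine norm_integral_le_of_norm_le (by linarith [pi_pos]) (ae_of_all _ fun θ _ => ?_)
      (hcont.abs.intervalIntegrable _ _)
    rw [norm_mul, norm_eq_abs]
    exact mul_le_of_le_one_right (abs_nonneg _) (by simpa using abs_cos_le_one _)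
  have := integral_abs_fwdDiff_three_sinHalfPow_near_le hp0.le hδ.le
  have := hC δ hδ h5δ
  rw [← hcoef, abs_mul, show |(-2 : ℝ) ^ 3| = 8 by norm_num] at hwindow
  linarith

lemma integral_eq_integral_comp_cos_mul_sin (F : ℝ → ℝ) :
    ∫ x in (-1 : ℝ)..1, F x = ∫ θ in 0..π, F (cos θ) * sin θ := by
  rw [integral_of_le (by norm_num), integral_of_le pi_pos.le, ← integral_Icc_eq_integral_Ioc,
    ← integral_Icc_eq_integral_Ioc, ← bijOn_cos.image_eq,
    integral_image_eq_integral_abs_deriv_smul measurableSet_Icc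
      (fun θ _ => (hasDerivAt_cos θ).hasDerivWithinAt) injOn_cos]
  refine setIntegral_congr_fun measurableSet_Icc fun θ hθ => ?_
  rw [abs_neg, abs_of_nonneg (sin_nonneg_of_nonneg_of_le_pi hθ.1 hθ.2), smul_eq_mul, mul_comm]

lemma integral_neg_pi_pi_eq_two_mul {f : ℝ → ℝ} (hf : Continuous f) (heven : ∀ x, f (-x) = f x) :
    ∫ θ in -π..π, f θ = 2 * ∫ θ in 0..π, f θ := by
  rw [← integral_add_adjacent_intervals (b := 0) (hf.intervalIntegrable _ _)
    (hf.intervalIntegrable _ _), ← neg_zero, ← intervalIntegral.integral_comp_neg]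
  simp only [heven, neg_zero]
  ring

lemma rpow_one_sub_cos_mul_rpow_one_add_cos_mul_sin (α : ℝ) {θ : ℝ} (hθ : θ ∈ Ioo 0 π) :
    (1 - cos θ) ^ α * (1 + cos θ) ^ (-(1 / 2) : ℝ) * sin θ =
      2 ^ (α + 1 / 2) * sinHalfPow (1 + 2 * α) θ := by
  set s := sin (θ / 2)
  set c := cos (θ / 2)
  have hs : 0 < s := sin_pos_of_pos_of_lt_pi (by linarith [hθ.1]) (by linarith [hθ.2, pi_pos])
  have hc : 0 < c := cos_pos_of_mem_Ioo ⟨by linarith [hθ.1, pi_pos], by linarith [hθ.2]⟩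
  have hθ2 : θ = 2 * (θ / 2) := by ring
  have h₁ : 1 - cos θ = 2 * s ^ 2 := by rw [hθ2, cos_two_mul]; linarith [sin_sq_add_cos_sq (θ / 2)]
  have h₂ : 1 + cos θ = 2 * c ^ 2 := by rw [hθ2, cos_two_mul]; ring
  have h₃ : sin θ = 2 * s * c := by rw [hθ2, sin_two_mul]
  have hsq : ∀ {x : ℝ} (r : ℝ), 0 < x → (2 * x ^ 2) ^ r = 2 ^ r * x ^ (2 * r) := fun r hx => by
    rw [mul_rpow zero_le_two (sq_nonneg _), ← rpow_natCast, ← rpow_mul hx.le, Nat.cast_ofNat]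
  rw [h₁, h₂, h₃, hsq α hs, hsq _ hc, sinHalfPow, abs_of_pos hs,
    show 2 * (-(1 / 2) : ℝ) = -1 by norm_num, rpow_neg_one, add_comm 1, rpow_add_one hs.ne', rpow_add two_pos, rpow_neg two_pos.le]
  field_simp
  rw [← rpow_natCast, ← rpow_mul zero_le_two]
  norm_num

lemma integral_chebyshevT_moment_eq {α : ℝ} (hα : -(1 / 2) ≤ α) (m : ℕ) :
    ∫ x in (-1 : ℝ)..1,
        (1 - x) ^ α * (1 + x) ^ (-(1 / 2) : ℝ) * (Polynomial.Chebyshev.T ℝ m).eval x =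
      2 ^ (α - 1 / 2) * ∫ θ in -π..π, sinHalfPow (1 + 2 * α) θ * cos (m * θ) := by
  rw [integral_neg_pi_pi_eq_two_mul (f := fun θ => sinHalfPow (1 + 2 * α) θ * cos (m * θ))
    ((sinHalfPow.continuous (by linarith)).mul (by fun_prop))
    fun θ => by rw [sinHalfPow.neg, mul_neg, cos_neg], integral_eq_integral_comp_cos_mul_sin,
    ← mul_assoc, ← rpow_add_one two_ne_zero, show α - 1 / 2 + 1 = α + 1 / 2 by ring,
    ← intervalIntegral.integral_const_mul]
  refine integral_congr_ae ((volume.ae_ne π).mono fun θ hne hθ => ?_)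
  rw [uIoc_of_le pi_pos.le] at hθ
  rw [Polynomial.Chebyshev.T_real_cos, Int.cast_natCast, mul_right_comm,
    rpow_one_sub_cos_mul_rpow_one_add_cos_mul_sin α ⟨hθ.1, lt_of_le_of_ne hθ.2 hne⟩]
  ring

theorem sinHalfPow_fourierCos_isBigO {p : ℝ} (hp0 : 0 < p) (hp2 : p < 2) :
    (fun m : ℕ => ∫ θ in -π..π, sinHalfPow p θ * cos (m * θ)) =O[atTop]
      fun m : ℕ => (m : ℝ) ^ (-(p + 1)) := by
  obtain ⟨C, hC⟩ := exists_abs_integral_sinHalfPow_mul_cos_le hp0 hp2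
  refine IsBigO.of_bound (C * π ^ (p + 1)) ?_
  filter_upwards [eventually_ge_atTop 3] with m hm
  have hm0 : (0 : ℝ) < m := by exact_mod_cast (by omega : 0 < m)
  rw [norm_eq_abs, norm_of_nonneg (rpow_nonneg hm0.le _), mul_assoc, rpow_neg hm0.le,
    ← div_eq_mul_inv, ← div_rpow pi_pos.le hm0.le]
  exact hC m hm

theorem modMoment_half_asymptotic (α : ℝ) (hα : -(1/2) < α) (hα' : α < 1/2) :
    ∃ C : ℝ, ∀ m : ℕ, 1 ≤ m →
      |∫ x in (-1:ℝ)..1,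
          (1 - x) ^ α * (1 + x) ^ (-(1/2) : ℝ) * (Polynomial.Chebyshev.T ℝ m).eval x|
        ≤ C * (m : ℝ) ^ (-2 - 2 * α) := by
  have hmoment : (fun m : ℕ => ∫ x in (-1:ℝ)..1,
      (1 - x) ^ α * (1 + x) ^ (-(1/2) : ℝ) * (Polynomial.Chebyshev.T ℝ m).eval x) =O[atTop]
        fun m : ℕ => (m : ℝ) ^ (-2 - 2 * α) := by
    simp_rw [integral_chebyshevT_moment_eq hα.le, show -2 - 2 * α = -(1 + 2 * α + 1) by ring]
    exact (sinHalfPow_fourierCos_isBigO (by linarith) (by linarith)).const_mul_left _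
  obtain ⟨C, -, hC⟩ := bound_of_isBigO_nat_atTop hmoment
  refine ⟨C, fun m hm => ?_⟩
  have hm0 : (0 : ℝ) < m := by exact_mod_cast hm
  simpa [norm_of_nonneg (rpow_nonneg hm0.le _)] using hC (rpow_pos_of_pos hm0 _).ne'
end

section
/- (Second mean value theorem for integration, decreasing case) If G : [a,b] → ℝ is a positive monotonically decreasing function and φ : [a,b] → ℝ is integrable, then there exists ζ ∈ [a,b] such that ∫_a^b G(x)φ(x) dx = G(a⁺) ∫_a^ζ φ(x) dx, where G(a⁺) = lim_{x→a⁺} G(x). -/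
open MeasureTheory Filter Set Topology

/-!
Layer cake: for `x ∈ (a, b]` one has `G x = ∫ t in (0, G(a⁺)], 1[t < G x]`, so by Fubini
`∫ₐᵇ G φ = ∫ t in (0, G(a⁺)], ∫_{S_t} φ` with `S_t = {x ∈ (a, b] | t < G x}`. As `G` decreases,
each `S_t` is `(a, s)` or `(a, s]`, so `∫_{S_t} φ = F s` for the primitive `F z = ∫ₐᶻ φ`. The
average over `t` of these values lies in the interval `F '' [a, b]`, i.e. it is some `F ζ`.
-/

section LayerCake

variable {α : Type*} [MeasurableSpace α] {μ : Measure α} {g φ : α → ℝ} {c : ℝ}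

theorem integrable_indicator_lt_prod (hg : Measurable g) (hφ : Integrable φ μ) :
    Integrable ({p : α × ℝ | p.2 < g p.1}.indicator fun p => φ p.1)
      (μ.prod (volume.restrict (Ioc 0 c))) := by
  have hφ₁ : Integrable (fun p : α × ℝ => φ p.1) (μ.prod (volume.restrict (Ioc 0 c))) := by
    simpa using hφ.mul_prod (integrable_const (1 : ℝ))
  exact hφ₁.indicator (measurableSet_lt measurable_snd (hg.comp measurable_fst))

theorem integrableOn_setIntegral_superlevel [SFinite μ] (hg : Measurable g) (hφ : Integrable φ μ) :
    IntegrableOn (fun t => ∫ x in {x | t < g x}, φ x ∂μ) (Ioc 0 c) := by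
  refine (integrable_indicator_lt_prod hg hφ).integral_prod_right.congr (ae_of_all _ fun t => ?_)
  exact integral_indicator (measurableSet_lt measurable_const hg)

theorem integral_mul_eq_integral_setIntegral_superlevel [SFinite μ] (hg : Measurable g)
    (hg_mem : ∀ᵐ x ∂μ, g x ∈ Icc 0 c) (hφ : Integrable φ μ) :
    ∫ x, g x * φ x ∂μ = ∫ t in Ioc 0 c, ∫ x in {x | t < g x}, φ x ∂μ := by
  have hint := integrable_indicator_lt_prod (c := c) hg hφ
  have hfiber : ∀ t, ∫ x, {p : α × ℝ | p.2 < g p.1}.indicator (fun p => φ p.1) (x, t) ∂μ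
      = ∫ x in {x | t < g x}, φ x ∂μ := fun t =>
    integral_indicator (measurableSet_lt measurable_const hg)
  rw [← integral_congr_ae (ae_of_all _ hfiber), ← integral_prod_symm _ hint, integral_prod _ hint]
  refine integral_congr_ae (hg_mem.mono fun x hx => ?_)
  have hlayer : Iio (g x) ∩ Ioc 0 c = Ioo 0 (g x) := by
    ext t; simp only [mem_inter_iff, mem_Ioc, mem_Iio, mem_Ioo]
    exact ⟨fun ⟨hlt, h0, _⟩ => ⟨h0, hlt⟩, fun ⟨h0, hlt⟩ => ⟨hlt, h0, hlt.le.trans hx.2⟩⟩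
  change g x * φ x = ∫ t in Ioc 0 c, (Iio (g x)).indicator (fun _ => φ x) t
  rw [integral_indicator measurableSet_Iio, setIntegral_const,
    measureReal_restrict_apply measurableSet_Iio, hlayer, Real.volume_real_Ioo_of_le hx.1,
    sub_zero, smul_eq_mul]

end LayerCake

theorem exists_setIntegral_eq_intervalIntegral_of_lowerClosed {a b : ℝ} (hab : a ≤ b)
    {S : Set ℝ} (hS : S ⊆ Ioc a b) (hS_lower : ∀ x ∈ S, Ioc a x ⊆ S) (φ : ℝ → ℝ) :
    ∃ s ∈ Icc a b, ∫ x in S, φ x = ∫ x in a..s, φ x := by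
  rcases S.eq_empty_or_nonempty with rfl | hne
  · exact ⟨a, left_mem_Icc.2 hab, by simp⟩
  have hbdd : BddAbove S := ⟨b, fun x hx => (hS hx).2⟩
  obtain ⟨x₀, hx₀⟩ := hne
  set s := sSup S
  have hsub : S ⊆ Ioc a s := fun x hx => ⟨(hS hx).1, le_csSup hbdd hx⟩
  have hsup : Ioo a s ⊆ S := fun y hy => by
    obtain ⟨x, hx, hyx⟩ := exists_lt_of_lt_csSup ⟨x₀, hx₀⟩ hy.2
    exact hS_lower x hx ⟨hy.1, hyx.le⟩
  have has : a ≤ s := ((hS hx₀).1.trans_le (le_csSup hbdd hx₀)).le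
  refine ⟨s, ⟨has, csSup_le ⟨x₀, hx₀⟩ fun x hx => (hS hx).2⟩, ?_⟩
  rw [intervalIntegral.integral_of_le has]
  exact setIntegral_congr_set <|
    hsub.eventuallyLE.antisymm (Ioo_ae_eq_Ioc.symm.le.trans hsup.eventuallyLE)

theorem exists_mem_Icc_setIntegral_Ioc_eq_mul {F h : ℝ → ℝ} {a b c : ℝ} (hab : a ≤ b)
    (hF : ContinuousOn F (Icc a b)) (hc : 0 < c) (hh : IntegrableOn h (Ioc 0 c))
    (hh_mem : ∀ t ∈ Ioc 0 c, h t ∈ F '' Icc a b) :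
    ∃ ζ ∈ Icc a b, ∫ t in Ioc 0 c, h t = c * F ζ := by
  have hconv : Convex ℝ (F '' Icc a b) := by
    rw [hF.image_Icc hab]; exact convex_Icc _ _
  obtain ⟨ζ, hζ, hFζ⟩ := hconv.set_average_mem (isCompact_Icc.image_of_continuousOn hF).isClosed
    (by simp [hc]) (by simp) ((ae_restrict_mem measurableSet_Ioc).mono hh_mem) hh
  refine ⟨ζ, hζ, ?_⟩
  rw [hFζ, setAverage_eq, Real.volume_real_Ioc_of_le hc.le, sub_zero, smul_eq_mul,
    mul_inv_cancel_left₀ hc.ne']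

theorem AntitoneOn.le_of_tendsto_nhdsGT {G : ℝ → ℝ} {a b Ga : ℝ} (hG : AntitoneOn G (Icc a b))
    (hGa : Tendsto G (𝓝[>] a) (𝓝 Ga)) {x : ℝ} (hx : x ∈ Ioc a b) : G x ≤ Ga :=
  ge_of_tendsto hGa <| mem_of_superset (Ioc_mem_nhdsGT hx.1) fun _ hy =>
    hG ⟨hy.1.le, hy.2.trans hx.2⟩ (Ioc_subset_Icc_self hx) hy.2

theorem second_mean_value_decreasing (a b : ℝ) (hab : a ≤ b) (G φ : ℝ → ℝ)
    (hGpos : ∀ x ∈ Set.Icc a b, 0 < G x)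
    (hGdec : AntitoneOn G (Set.Icc a b))
    (hφ : IntervalIntegrable φ volume a b)
    (Ga : ℝ) (hGa : Tendsto G (nhdsWithin a (Set.Ioi a)) (nhds Ga)) :
    ∃ ζ ∈ Set.Icc a b, ∫ x in a..b, G x * φ x = Ga * ∫ x in a..ζ, φ x := by
  obtain rfl | hlt := hab.eq_or_lt
  · exact ⟨a, left_mem_Icc.2 le_rfl, by simp⟩
  -- `G` extended constantly outside `[a, b]`: globally antitone, hence measurable
  set H : ℝ → ℝ := fun x => G (projIcc a b hab x)
  have hH_anti : Antitone H := fun x y hxy =>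
    hGdec (projIcc a b hab x).2 (projIcc a b hab y).2 (monotone_projIcc hab hxy)
  have hH_eq : ∀ x ∈ Ioc a b, H x = G x := fun x hx => by
    simp [H, projIcc_of_mem hab (Ioc_subset_Icc_self hx)]
  have hGa_pos : 0 < Ga :=
    (hGpos b (right_mem_Icc.2 hab)).trans_le (hGdec.le_of_tendsto_nhdsGT hGa ⟨hlt, le_rfl⟩)
  have hH_mem : ∀ᵐ x ∂volume.restrict (Ioc a b), H x ∈ Icc 0 Ga :=
    (ae_restrict_mem measurableSet_Ioc).mono fun x hx => by
      rw [hH_eq x hx]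
      exact ⟨(hGpos x (Ioc_subset_Icc_self hx)).le, hGdec.le_of_tendsto_nhdsGT hGa hx⟩
  have hlayers : ∫ x in a..b, G x * φ x
      = ∫ t in Ioc 0 Ga, ∫ x in {x | t < H x}, φ x ∂volume.restrict (Ioc a b) := by
    rw [intervalIntegral.integral_of_le hab, ← integral_mul_eq_integral_setIntegral_superlevel
      hH_anti.measurable hH_mem hφ.1]
    exact setIntegral_congr_fun measurableSet_Ioc fun x hx => by rw [hH_eq x hx]
  have hsuperlevel (t : ℝ) : ∃ s ∈ Icc a b,
      ∫ x in {x | t < H x}, φ x ∂volume.restrict (Ioc a b) = ∫ x in a..s, φ x := by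
    rw [Measure.restrict_restrict (measurableSet_lt measurable_const hH_anti.measurable)]
    exact exists_setIntegral_eq_intervalIntegral_of_lowerClosed hab inter_subset_right
      (fun x hx y hy => ⟨hx.1.trans_le (hH_anti hy.2), hy.1, hy.2.trans hx.2.2⟩) φ
  have hF : ContinuousOn (fun z => ∫ x in a..z, φ x) (Icc a b) := by
    simpa [uIcc_of_le hab] using intervalIntegral.continuousOn_primitive_interval' hφ left_mem_uIcc
  obtain ⟨ζ, hζ, hmean⟩ := exists_mem_Icc_setIntegral_Ioc_eq_mul hab hF hGa_pos
    (integrableOn_setIntegral_superlevel hH_anti.measurable hφ.1)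
    fun t _ => (hsuperlevel t).imp fun s ⟨hs, hs_eq⟩ => ⟨hs, hs_eq.symm⟩
  exact ⟨ζ, hζ, hlayers.trans hmean⟩
end
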